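/- arXiv:2210.10765 — 3 statements merged into one kernel-verified Lean document; each statement's English description precedes it below -/
import Mathlib

section
/- In the stochastic setting, let (s,a) transition to a reversible state with probability at least η₁, and (s̄,ā) transition to a reversible state with probability at most η₂. If η₁ > η₂/(1−γ) and ε > η₂(R_max − R_min)/(η₁ − γη₁ − η₂), then for every policy π, Q^π(s,a) > Q^π(s̄,ā). -/
/-- Stochastic setting. Suppose `(s,a)` leads to a reversible state with
probability `p₁ ≥ η₁` and `(s̄,ā)` with probability `p₂ ≤ η₂`. Writing
`L = (Rmin-ε)/(1-γ)` for the value of irreversible states, the Q-values satisfy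
`Q^π(s,a) = p₁(r₁ + γ v₁) + (1-p₁) L` where `v₁ = E[Q^π(s',a')]` over reversible
successors (with `L ≤ v₁ ≤ Rmax/(1-γ)` and `Rmin ≤ r₁ ≤ Rmax`), and similarly for
`(s̄,ā)`. If `η₁ > η₂/(1-γ)` and `ε > η₂ (Rmax - Rmin)/(η₁ - γ η₁ - η₂)`, then
`Q^π(s,a) > Q^π(s̄,ā)` for every policy `π`. -/
theorem stmt_3 (γ Rmin Rmax ε η₁ η₂ : ℝ)
    (hγ0 : 0 ≤ γ) (hγ1 : γ < 1)
    (hη : η₁ > η₂ / (1 - γ))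
    (hεbig : ε > η₂ / (η₁ - γ * η₁ - η₂) * (Rmax - Rmin))
    (q₁ q₂ p₁ p₂ r₁ r₂ v₁ v₂ : ℝ)
    (hp₁ : η₁ ≤ p₁) (hp₁1 : p₁ ≤ 1)
    (hp₂0 : 0 ≤ p₂) (hp₂ : p₂ ≤ η₂)
    (hr₁ : Rmin ≤ r₁ ∧ r₁ ≤ Rmax) (hr₂ : Rmin ≤ r₂ ∧ r₂ ≤ Rmax)
    (hv₁ : (Rmin - ε) / (1 - γ) ≤ v₁ ∧ v₁ ≤ Rmax / (1 - γ))
    (hv₂ : (Rmin - ε) / (1 - γ) ≤ v₂ ∧ v₂ ≤ Rmax / (1 - γ))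
    (hq₁ : q₁ = p₁ * (r₁ + γ * v₁) + (1 - p₁) * ((Rmin - ε) / (1 - γ)))
    (hq₂ : q₂ = p₂ * (r₂ + γ * v₂) + (1 - p₂) * ((Rmin - ε) / (1 - γ))) :
    q₁ > q₂ := by
  obtain ⟨hr₁l, hr₁u⟩ := hr₁
  obtain ⟨hr₂l, hr₂u⟩ := hr₂
  obtain ⟨hv₁l, hv₁u⟩ := hv₁
  obtain ⟨hv₂l, hv₂u⟩ := hv₂
  have hD : (0:ℝ) < 1 - γ := by linarith
  have hden : 0 < η₁ - γ * η₁ - η₂ := by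
    have := (div_lt_iff₀ hD).mp hη
    nlinarith
  have hη₂0 : 0 ≤ η₂ := le_trans hp₂0 hp₂
  have hε0 : 0 < ε := lt_of_le_of_lt
    (mul_nonneg (div_nonneg hη₂0 hden.le) (by linarith)) hεbig
  have hεD : ε * (η₁ - γ * η₁ - η₂) > η₂ * (Rmax - Rmin) := by
    rw [div_mul_eq_mul_div, gt_iff_lt, div_lt_iff₀ hden] at hεbig
    linarith
  have hLe : (Rmin - ε) / (1 - γ) * (1 - γ) = Rmin - ε := div_mul_cancel₀ _ hD.ne'
  have hUe : Rmax / (1 - γ) * (1 - γ) = Rmax := div_mul_cancel₀ _ hD.ne'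
  clear hη hεbig
  generalize hLg : (Rmin - ε) / (1 - γ) = L at *
  generalize hUg : Rmax / (1 - γ) = U at *
  have hp₁0 : 0 < p₁ := lt_of_lt_of_le (by nlinarith) hp₁
  have hUL : 0 ≤ U - L := by nlinarith
  have key1 : q₁ ≥ p₁ * ε + L := by
    rw [hq₁]
    nlinarith [mul_nonneg hp₁0.le (sub_nonneg.mpr hr₁l),
      mul_nonneg (mul_nonneg hp₁0.le hγ0) (sub_nonneg.mpr hv₁l)]
  have key2 : q₂ ≤ p₂ * (U - L) + L := by
    rw [hq₂]
    nlinarith [mul_nonneg hp₂0 (sub_nonneg.mpr hr₂u),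
      mul_nonneg (mul_nonneg hp₂0 hγ0) (sub_nonneg.mpr hv₂u)]
  have hULe : (U - L) * (1 - γ) = Rmax - Rmin + ε := by rw [sub_mul, hLe, hUe]; ring
  have h2 : η₂ * ((U - L) * (1 - γ)) < ε * η₁ * (1 - γ) := by rw [hULe]; linarith [hεD]
  have h3 : η₂ * (U - L) < ε * η₁ := by
    refine lt_of_mul_lt_mul_right ?_ hD.le
    rw [mul_assoc]; exact h2
  have h1 : p₂ * (U - L) ≤ η₂ * (U - L) := mul_le_mul_of_nonneg_right hp₂ hUL
  have h4 : ε * η₁ ≤ ε * p₁ := mul_le_mul_of_nonneg_left hp₁ hε0.le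
  have h5 : ε * p₁ = p₁ * ε := mul_comm _ _
  linarith
end

section
/- If ‖R_ρ − R̂_ρ‖_∞ ≤ δ, then for any policy π, the fixed point Q^π of the true Bellman operator B^π and the fixed point Q̂^π of the empirical Bellman operator B̂^π satisfy |Q^π(s,a) − Q̂^π(s,a)| ≤ δ(R_max − R_min + ε)/(1−γ)² for all (s,a). -/
lemma aux_summable_of_tsum_eq_one {S : Type*} {f : S → ℝ} (h : ∑' s, f s = 1) :
    Summable f := by
  by_contra hc
  rw [tsum_eq_zero_of_not_summable hc] at h
  norm_num at h

lemma aux_summable_of_le_mul {S : Type*} {p f : S → ℝ} {K : ℝ} (hp : Summable p)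
    (h : ∀ s, |f s| ≤ p s * K) : Summable f :=
  (Summable.of_nonneg_of_le (fun s => abs_nonneg _) h (hp.mul_right K)).of_abs

lemma aux_abs_tsum_le {S : Type*} {p f : S → ℝ} {K : ℝ} (hp : Summable p)
    (h : ∀ s, |f s| ≤ p s * K) : |∑' s, f s| ≤ (∑' s, p s) * K := by
  have hf : Summable f := aux_summable_of_le_mul hp h
  have hpk : Summable (fun s => p s * K) := hp.mul_right K
  rw [abs_le, ← tsum_mul_right]
  constructor
  · have := Summable.tsum_le_tsum (f := fun s => -(p s * K)) (g := f)
      (fun s => neg_le_of_abs_le (h s)) hpk.neg hf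
    simpa [tsum_neg] using this
  · exact Summable.tsum_le_tsum (fun s => le_of_abs_le (h s)) hf hpk

/-- The Bellman backup operator with reversibility weight `w : S → [0,1]` for a
discrete MDP (`w = R_ρ` gives the true operator `B^π`, `w = R̂_ρ` the empirical one). -/
noncomputable def bellmanW {S A : Type*} (γ Rmin ε : ℝ) (r : S → A → ℝ)
    (P : S → A → S → ℝ) (π : S → A → ℝ) (w : S → ℝ)
    (Q : S → A → ℝ) (s : S) (a : A) : ℝ :=
  ∑' s' : S, P s a s' *
    (w s' * (r s a + γ * ∑' a' : A, π s' a' * Q s' a')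
      + (1 - w s') * ((Rmin - ε) / (1 - γ)))

/-- Lemma A.4: If `‖R_ρ - R̂_ρ‖_∞ ≤ δ`, then for any policy `π` the fixed
points `Q^π` of the true operator `B^π` and `Q̂^π` of the empirical operator `B̂^π`
satisfy `|Q^π(s,a) - Q̂^π(s,a)| ≤ δ (Rmax - Rmin + ε)/(1-γ)²` for all `(s,a)`. -/
theorem stmt_5 {S A : Type*} (γ Rmin Rmax ε δ : ℝ) (hγ0 : 0 ≤ γ) (hγ1 : γ < 1)
    (r : S → A → ℝ) (hr : ∀ s a, Rmin ≤ r s a ∧ r s a ≤ Rmax)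
    (P : S → A → S → ℝ) (hP0 : ∀ s a s', 0 ≤ P s a s') (hP1 : ∀ s a, ∑' s', P s a s' = 1)
    (π : S → A → ℝ) (hπ0 : ∀ s a, 0 ≤ π s a) (hπ1 : ∀ s, ∑' a, π s a = 1)
    (Rρ : S → ℝ) (hRρ : ∀ s, Rρ s = 0 ∨ Rρ s = 1)          -- true reversibility labels
    (Rhat : S → ℝ) (hRhat : ∀ s, Rhat s ∈ Set.Icc (0 : ℝ) 1) -- estimated reversibility
    (hδ : ∀ s, |Rρ s - Rhat s| ≤ δ)
    (Qπ Qhat : S → A → ℝ)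
    -- fixed points of the true and empirical Bellman operators:
    (hfixQ : ∀ s a, Qπ s a = bellmanW γ Rmin ε r P π Rρ Qπ s a)
    (hfixQhat : ∀ s a, Qhat s a = bellmanW γ Rmin ε r P π Rhat Qhat s a)
    -- fixed-point Q-values are bounded:
    (hQb : ∀ s a, (Rmin - ε) / (1 - γ) ≤ Qπ s a ∧ Qπ s a ≤ Rmax / (1 - γ))
    (hQhatb : ∀ s a, (Rmin - ε) / (1 - γ) ≤ Qhat s a ∧ Qhat s a ≤ Rmax / (1 - γ)) :
    ∀ s a, |Qπ s a - Qhat s a| ≤ δ * (Rmax - Rmin + ε) / (1 - γ) ^ 2 := by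
  intro s0 a0
  have hγ' : (0:ℝ) < 1 - γ := by linarith
  have h1γ : (1:ℝ) - γ ≠ 0 := ne_of_gt hγ'
  set L : ℝ := (Rmin - ε) / (1 - γ) with hL
  set H : ℝ := Rmax / (1 - γ) with hH
  have hLH : L ≤ H := le_trans (hQb s0 a0).1 (hQb s0 a0).2
  set C0 : ℝ := H - L with hC0def
  have hC00 : (0:ℝ) ≤ C0 := by rw [hC0def]; linarith
  set M : ℝ := |L| + C0 with hM
  have habsM : ∀ q : ℝ, L ≤ q → q ≤ H → |q| ≤ M := by
    intro q h1 h2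
    rw [hM, abs_le]
    constructor
    · have := neg_abs_le L; linarith
    · have := le_abs_self L; rw [hC0def] at *; linarith
  have hQM : ∀ s a, |Qπ s a| ≤ M := fun s a => habsM _ (hQb s a).1 (hQb s a).2
  have hQhM : ∀ s a, |Qhat s a| ≤ M := fun s a => habsM _ (hQhatb s a).1 (hQhatb s a).2
  set Dset : Set ℝ := Set.range (fun p : S × A => |Qπ p.1 p.2 - Qhat p.1 p.2|) with hDset
  have hne : Dset.Nonempty := ⟨_, ⟨(s0, a0), rfl⟩⟩
  have hbdd : BddAbove Dset := by
    refine ⟨2 * M, ?_⟩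
    rintro x ⟨⟨s, a⟩, rfl⟩
    have := abs_sub (Qπ s a) (Qhat s a)
    have h1 := hQM s a; have h2 := hQhM s a
    calc |Qπ s a - Qhat s a| ≤ |Qπ s a| + |Qhat s a| := abs_sub _ _
      _ ≤ 2 * M := by linarith
  set D : ℝ := sSup Dset with hD
  have hDle : ∀ s a, |Qπ s a - Qhat s a| ≤ D := fun s a => le_csSup hbdd ⟨(s, a), rfl⟩
  have hδ0 : (0:ℝ) ≤ δ := le_trans (abs_nonneg _) (hδ s0)
  have hρ0 : ∀ s, (0:ℝ) ≤ Rρ s := fun s => by rcases hRρ s with h | h <;> rw [h] <;> norm_num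
  have hρabs : ∀ s, |Rρ s| ≤ 1 := fun s => by rcases hRρ s with h | h <;> rw [h] <;> norm_num
  have hh0 : ∀ s, (0:ℝ) ≤ Rhat s := fun s => (hRhat s).1
  have hhabs : ∀ s, |Rhat s| ≤ 1 := fun s => by
    rw [abs_of_nonneg (hh0 s)]; exact (hRhat s).2
  have hπs : ∀ s', Summable (π s') := fun s' => aux_summable_of_tsum_eq_one (hπ1 s')
  have hHfix : Rmax + γ * H = H := by rw [hH]; field_simp; ring
  -- summability of value sums
  have hsumV : ∀ (Q : S → A → ℝ), (∀ s a, |Q s a| ≤ M) → ∀ s',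
      Summable (fun a' => π s' a' * Q s' a') := by
    intro Q hQ s'
    apply aux_summable_of_le_mul (hπs s') (K := M)
    intro a'
    rw [abs_mul, abs_of_nonneg (hπ0 s' a')]
    exact mul_le_mul_of_nonneg_left (hQ s' a') (hπ0 s' a')
  -- bounds on value sums
  have hVgen : ∀ (Q : S → A → ℝ), (∀ s a, |Q s a| ≤ M) → (∀ s a, L ≤ Q s a ∧ Q s a ≤ H) →
      ∀ s', L ≤ (∑' a', π s' a' * Q s' a') ∧ (∑' a', π s' a' * Q s' a') ≤ H := by
    intro Q hQM' hQ s'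
    have hsum := hsumV Q hQM' s'
    constructor
    · calc L = (∑' a', π s' a') * L := by rw [hπ1 s', one_mul]
        _ = ∑' a', π s' a' * L := tsum_mul_right.symm
        _ ≤ ∑' a', π s' a' * Q s' a' :=
            Summable.tsum_le_tsum (fun a' => mul_le_mul_of_nonneg_left (hQ s' a').1 (hπ0 s' a'))
              ((hπs s').mul_right L) hsum
    · calc (∑' a', π s' a' * Q s' a') ≤ ∑' a', π s' a' * H :=
            Summable.tsum_le_tsum (fun a' => mul_le_mul_of_nonneg_left (hQ s' a').2 (hπ0 s' a'))
              hsum ((hπs s').mul_right H)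
        _ = (∑' a', π s' a') * H := tsum_mul_right
        _ = H := by rw [hπ1 s', one_mul]
  -- key pointwise bound
  have key : ∀ s a, |Qπ s a - Qhat s a| ≤ δ * C0 + γ * D := by
    intro s a
    have hPs : Summable (P s a) := aux_summable_of_tsum_eq_one (hP1 s a)
    set Vπ : S → ℝ := fun s' => ∑' a', π s' a' * Qπ s' a' with hVπdef
    set Vh : S → ℝ := fun s' => ∑' a', π s' a' * Qhat s' a' with hVhdef
    have hVπb : ∀ s', L ≤ Vπ s' ∧ Vπ s' ≤ H := by
      intro s'; simp only [hVπdef]; exact hVgen Qπ hQM hQb s'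
    have hVhb : ∀ s', L ≤ Vh s' ∧ Vh s' ≤ H := by
      intro s'; simp only [hVhdef]; exact hVgen Qhat hQhM hQhatb s'
    have hVπM : ∀ s', |Vπ s'| ≤ M := fun s' => habsM _ (hVπb s').1 (hVπb s').2
    have hVhM : ∀ s', |Vh s'| ≤ M := fun s' => habsM _ (hVhb s').1 (hVhb s').2
    have hΔV : ∀ s', |Vπ s' - Vh s'| ≤ D := by
      intro s'
      have h1 := hsumV Qπ hQM s'
      have h2 := hsumV Qhat hQhM s'
      have heq : Vπ s' - Vh s' = ∑' a', (π s' a' * Qπ s' a' - π s' a' * Qhat s' a') := by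
        simp only [hVπdef, hVhdef]
        exact (Summable.tsum_sub h1 h2).symm
      rw [heq]
      have hb := aux_abs_tsum_le (hπs s')
        (f := fun a' => π s' a' * Qπ s' a' - π s' a' * Qhat s' a') (K := D)
        (fun a' => by
          show |π s' a' * Qπ s' a' - π s' a' * Qhat s' a'| ≤ π s' a' * D
          rw [← mul_sub, abs_mul, abs_of_nonneg (hπ0 s' a')]
          exact mul_le_mul_of_nonneg_left (hDle s' a') (hπ0 s' a'))
      rwa [hπ1 s', one_mul] at hb
    set yπ : S → ℝ := fun s' => r s a + γ * Vπ s' - L with hyπdef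
    set yh : S → ℝ := fun s' => r s a + γ * Vh s' - L with hyhdef
    set K1 : ℝ := |r s a| + γ * M + |L| with hK1
    have hyK : ∀ (V : S → ℝ), (∀ s', |V s'| ≤ M) → ∀ s', |r s a + γ * V s' - L| ≤ K1 := by
      intro V hV s'
      have h5 := abs_le.1 (hV s')
      have h6 : γ * V s' ≤ γ * M := mul_le_mul_of_nonneg_left h5.2 hγ0
      have h7 : γ * (-M) ≤ γ * V s' := mul_le_mul_of_nonneg_left h5.1 hγ0
      have h8 := le_abs_self (r s a); have h9 := neg_abs_le (r s a)
      have h10 := le_abs_self L; have h11 := neg_abs_le L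
      rw [hK1, abs_le]
      constructor <;> nlinarith
    have hyπK : ∀ s', |yπ s'| ≤ K1 := fun s' => by simp only [hyπdef]; exact hyK Vπ hVπM s'
    have hyhK : ∀ s', |yh s'| ≤ K1 := fun s' => by simp only [hyhdef]; exact hyK Vh hVhM s'
    -- generic product bounds
    have hprod : ∀ (c y : S → ℝ) (Kc Ky : ℝ), (∀ s', |c s'| ≤ Kc) → (∀ s', |y s'| ≤ Ky) →
        ∀ s', |P s a s' * (c s' * y s')| ≤ P s a s' * (Kc * Ky) := by
      intro c y Kc Ky hc hy s'
      rw [abs_mul, abs_of_nonneg (hP0 s a s'), abs_mul]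
      exact mul_le_mul_of_nonneg_left
        (mul_le_mul (hc s') (hy s') (abs_nonneg _) ((abs_nonneg (c s')).trans (hc s')))
        (hP0 s a s')
    have htsum_bound : ∀ (c y : S → ℝ) (Kc Ky : ℝ), (∀ s', |c s'| ≤ Kc) → (∀ s', |y s'| ≤ Ky) →
        |∑' s', P s a s' * (c s' * y s')| ≤ Kc * Ky := by
      intro c y Kc Ky hc hy
      have hb := aux_abs_tsum_le hPs (hprod c y Kc Ky hc hy)
      rwa [hP1 s a, one_mul] at hb
    have hSg1 : Summable (fun s' => P s a s' * (Rρ s' * yπ s')) :=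
      aux_summable_of_le_mul hPs (hprod Rρ yπ 1 K1 hρabs hyπK)
    have hSg1' : Summable (fun s' => P s a s' * (Rρ s' * yh s')) :=
      aux_summable_of_le_mul hPs (hprod Rρ yh 1 K1 hρabs hyhK)
    have hSg2 : Summable (fun s' => P s a s' * (Rhat s' * yh s')) :=
      aux_summable_of_le_mul hPs (hprod Rhat yh 1 K1 hhabs hyhK)
    have hSg2' : Summable (fun s' => P s a s' * (Rhat s' * yπ s')) :=
      aux_summable_of_le_mul hPs (hprod Rhat yπ 1 K1 hhabs hyπK)
    have hSf3 : Summable (fun s' => P s a s' * ((Rρ s' - Rhat s') * yh s')) :=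
      aux_summable_of_le_mul hPs (hprod (fun s' => Rρ s' - Rhat s') yh δ K1 hδ hyhK)
    have hSf3' : Summable (fun s' => P s a s' * ((Rρ s' - Rhat s') * yπ s')) :=
      aux_summable_of_le_mul hPs (hprod (fun s' => Rρ s' - Rhat s') yπ δ K1 hδ hyπK)
    have hSf4 : Summable (fun s' => P s a s' * (Rρ s' * (Vπ s' - Vh s'))) :=
      aux_summable_of_le_mul hPs (hprod Rρ (fun s' => Vπ s' - Vh s') 1 D hρabs hΔV)
    have hSf4' : Summable (fun s' => P s a s' * (Rhat s' * (Vπ s' - Vh s'))) :=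
      aux_summable_of_le_mul hPs (hprod Rhat (fun s' => Vπ s' - Vh s') 1 D hhabs hΔV)
    -- fixed point equations, shifted
    have hfq := hfixQ s a
    have hfqh := hfixQhat s a
    simp only [bellmanW] at hfq hfqh
    rw [← hL] at hfq hfqh
    have hAeq : Qπ s a = (∑' s', P s a s' * (Rρ s' * yπ s')) + L := by
      rw [hfq]
      have hpt : ∀ s', P s a s' * (Rρ s' * (r s a + γ * ∑' a', π s' a' * Qπ s' a')
            + (1 - Rρ s') * L)
          = P s a s' * (Rρ s' * yπ s') + P s a s' * L := by
        intro s'; simp only [hyπdef, hVπdef]; ring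
      rw [tsum_congr hpt, Summable.tsum_add hSg1 (hPs.mul_right L), tsum_mul_right, hP1 s a, one_mul]
    have hBeq : Qhat s a = (∑' s', P s a s' * (Rhat s' * yh s')) + L := by
      rw [hfqh]
      have hpt : ∀ s', P s a s' * (Rhat s' * (r s a + γ * ∑' a', π s' a' * Qhat s' a')
            + (1 - Rhat s') * L)
          = P s a s' * (Rhat s' * yh s') + P s a s' * L := by
        intro s'; simp only [hyhdef, hVhdef]; ring
      rw [tsum_congr hpt, Summable.tsum_add hSg2 (hPs.mul_right L), tsum_mul_right, hP1 s a, one_mul]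
    -- decompositions
    have hdecompU : Qπ s a - Qhat s a
        = (∑' s', P s a s' * ((Rρ s' - Rhat s') * yh s'))
          + γ * ∑' s', P s a s' * (Rρ s' * (Vπ s' - Vh s')) := by
      have hpt : ∀ s', P s a s' * (Rρ s' * yπ s') - P s a s' * (Rhat s' * yh s')
          = P s a s' * ((Rρ s' - Rhat s') * yh s')
            + γ * (P s a s' * (Rρ s' * (Vπ s' - Vh s'))) := by
        intro s'; simp only [hyπdef, hyhdef]; ring
      rw [hAeq, hBeq, show ((∑' s', P s a s' * (Rρ s' * yπ s')) + L)
          - ((∑' s', P s a s' * (Rhat s' * yh s')) + L)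
          = (∑' s', P s a s' * (Rρ s' * yπ s')) - ∑' s', P s a s' * (Rhat s' * yh s') by ring,
        ← Summable.tsum_sub hSg1 hSg2, tsum_congr hpt, Summable.tsum_add hSf3 (hSf4.mul_left γ), tsum_mul_left]
    have hdecompL : Qπ s a - Qhat s a
        = (∑' s', P s a s' * ((Rρ s' - Rhat s') * yπ s'))
          + γ * ∑' s', P s a s' * (Rhat s' * (Vπ s' - Vh s')) := by
      have hpt : ∀ s', P s a s' * (Rρ s' * yπ s') - P s a s' * (Rhat s' * yh s')
          = P s a s' * ((Rρ s' - Rhat s') * yπ s')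
            + γ * (P s a s' * (Rhat s' * (Vπ s' - Vh s'))) := by
        intro s'; simp only [hyπdef, hyhdef]; ring
      rw [hAeq, hBeq, show ((∑' s', P s a s' * (Rρ s' * yπ s')) + L)
          - ((∑' s', P s a s' * (Rhat s' * yh s')) + L)
          = (∑' s', P s a s' * (Rρ s' * yπ s')) - ∑' s', P s a s' * (Rhat s' * yh s') by ring,
        ← Summable.tsum_sub hSg1 hSg2, tsum_congr hpt, Summable.tsum_add hSf3' (hSf4'.mul_left γ), tsum_mul_left]
    -- bounds on the second terms
    have ht2U := htsum_bound Rρ (fun s' => Vπ s' - Vh s') 1 D hρabs hΔV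
    have ht2L := htsum_bound Rhat (fun s' => Vπ s' - Vh s') 1 D hhabs hΔV
    rw [one_mul] at ht2U ht2L
    have ht2U' := abs_le.1 ht2U
    have ht2L' := abs_le.1 ht2L
    have hsU : γ * (∑' s', P s a s' * (Rρ s' * (Vπ s' - Vh s'))) ≤ γ * D :=
      mul_le_mul_of_nonneg_left ht2U'.2 hγ0
    have hsL : -(γ * D) ≤ γ * (∑' s', P s a s' * (Rhat s' * (Vπ s' - Vh s'))) := by
      have := mul_le_mul_of_nonneg_left ht2L'.1 hγ0
      linarith [this]
    -- bounds on the first terms, by cases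
    have hterm1U : (∑' s', P s a s' * ((Rρ s' - Rhat s') * yh s')) ≤ δ * C0 ∧
        -(δ * C0) ≤ ∑' s', P s a s' * ((Rρ s' - Rhat s') * yπ s') := by
      by_cases hcase : -C0 ≤ r s a + γ * L - L
      · have hyC0 : ∀ (V : S → ℝ), (∀ s', L ≤ V s' ∧ V s' ≤ H) →
            ∀ s', |r s a + γ * V s' - L| ≤ C0 := by
          intro V hV s'
          have h1 : γ * L ≤ γ * V s' := mul_le_mul_of_nonneg_left (hV s').1 hγ0
          have h2 : γ * V s' ≤ γ * H := mul_le_mul_of_nonneg_left (hV s').2 hγ0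
          have h3 := (hr s a).2
          rw [abs_le]
          constructor
          · linarith
          · rw [hC0def]; linarith
        have hu := htsum_bound (fun s' => Rρ s' - Rhat s') yh δ C0 hδ
          (fun s' => by simp only [hyhdef]; exact hyC0 Vh hVhb s')
        have hl := htsum_bound (fun s' => Rρ s' - Rhat s') yπ δ C0 hδ
          (fun s' => by simp only [hyπdef]; exact hyC0 Vπ hVπb s')
        exact ⟨(le_abs_self _).trans hu, neg_le_of_abs_le hl⟩
      · push_neg at hcase
        have hynp : ∀ (V : S → ℝ), (∀ s', L ≤ V s' ∧ V s' ≤ H) →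
            ∀ s', r s a + γ * V s' - L ≤ 0 := by
          intro V hV s'
          have h1 : γ * V s' ≤ γ * H := mul_le_mul_of_nonneg_left (hV s').2 hγ0
          have h2 : γ * C0 ≤ C0 := mul_le_of_le_one_left hC00 hγ1.le
          have h3 : γ * H = γ * L + γ * C0 := by rw [hC0def]; ring
          linarith
        have hδC0 : (0:ℝ) ≤ δ * C0 := mul_nonneg hδ0 hC00
        constructor
        · -- upper: split and use Qhat ≥ L
          have hsplit : (∑' s', P s a s' * ((Rρ s' - Rhat s') * yh s'))
              = (∑' s', P s a s' * (Rρ s' * yh s')) - ∑' s', P s a s' * (Rhat s' * yh s') := by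
            rw [← Summable.tsum_sub hSg1' hSg2]
            exact tsum_congr fun s' => by ring
          have h1 : (∑' s', P s a s' * (Rρ s' * yh s')) ≤ 0 := by
            apply tsum_nonpos
            intro s'
            have hnn : (0:ℝ) ≤ P s a s' * Rρ s' := mul_nonneg (hP0 s a s') (hρ0 s')
            have hyh0 : yh s' ≤ 0 := by simp only [hyhdef]; exact hynp Vh hVhb s'
            calc P s a s' * (Rρ s' * yh s') = (P s a s' * Rρ s') * yh s' := by ring
              _ ≤ 0 := mul_nonpos_iff.2 (Or.inl ⟨hnn, hyh0⟩)
          have h2 : (0:ℝ) ≤ ∑' s', P s a s' * (Rhat s' * yh s') := by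
            have := (hQhatb s a).1
            have hB' : (∑' s', P s a s' * (Rhat s' * yh s')) = Qhat s a - L := by
              rw [hBeq]; ring
            linarith [hB'.symm ▸ sub_nonneg.2 (hQhatb s a).1]
          rw [hsplit]; linarith
        · -- lower: split and use Qπ ≥ L
          have hsplit : (∑' s', P s a s' * ((Rρ s' - Rhat s') * yπ s'))
              = (∑' s', P s a s' * (Rρ s' * yπ s')) - ∑' s', P s a s' * (Rhat s' * yπ s') := by
            rw [← Summable.tsum_sub hSg1 hSg2']
            exact tsum_congr fun s' => by ring
          have h1 : (0:ℝ) ≤ ∑' s', P s a s' * (Rρ s' * yπ s') := by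
            have hA' : (∑' s', P s a s' * (Rρ s' * yπ s')) = Qπ s a - L := by
              rw [hAeq]; ring
            linarith [hA'.symm ▸ sub_nonneg.2 (hQb s a).1]
          have h2 : (∑' s', P s a s' * (Rhat s' * yπ s')) ≤ 0 := by
            apply tsum_nonpos
            intro s'
            have hnn : (0:ℝ) ≤ P s a s' * Rhat s' := mul_nonneg (hP0 s a s') (hh0 s')
            have hyπ0 : yπ s' ≤ 0 := by simp only [hyπdef]; exact hynp Vπ hVπb s'
            calc P s a s' * (Rhat s' * yπ s') = (P s a s' * Rhat s') * yπ s' := by ring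
              _ ≤ 0 := mul_nonpos_iff.2 (Or.inl ⟨hnn, hyπ0⟩)
          rw [hsplit]; linarith
    rw [abs_le]
    constructor
    · rw [hdecompL]; linarith [hterm1U.2, hsL]
    · rw [hdecompU]; linarith [hterm1U.1, hsU]
  -- conclude
  have hDle2 : D ≤ δ * C0 + γ * D := by
    apply csSup_le hne
    rintro x ⟨⟨s, a⟩, rfl⟩
    exact key s a
  have hDfin : D ≤ δ * C0 / (1 - γ) := by
    rw [le_div_iff₀ hγ']
    nlinarith [hDle2]
  have hfinal : δ * C0 / (1 - γ) = δ * (Rmax - Rmin + ε) / (1 - γ) ^ 2 := by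
    rw [hC0def, hH, hL]
    field_simp
    ring
  calc |Qπ s0 a0 - Qhat s0 a0| ≤ D := hDle s0 a0
    _ ≤ δ * C0 / (1 - γ) := hDfin
    _ = δ * (Rmax - Rmin + ε) / (1 - γ) ^ 2 := hfinal
end

section
/- Let π* be the optimal policy with value Q* under the true Bellman optimality operator B*, and let π̂* be the greedy policy with respect to the fixed point Q̂* of the empirical Bellman optimality operator B̂*. If ‖R_ρ − R̂_ρ‖_∞ ≤ δ, then Q^{π̂*}(s,a) ≥ Q*(s,a) − 2δ(R_max − R_min + ε)/(1−γ)² for all (s,a). -/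
/-- Theorem 5.1: Let `π*` be the optimal policy with true value `Q*`, and
`π̂*` the policy that is optimal for the empirical Bellman optimality operator `B̂*`
(so `Q̂(π*) ≤ Q̂(π̂*)` pointwise). Assuming `‖R_ρ - R̂_ρ‖_∞ ≤ δ` implies the key lemma
`|Q^π - Q̂^π|_∞ ≤ δ(Rmax - Rmin + ε)/(1-γ)²` for every policy `π`, we get
`Q^{π̂*}(s,a) ≥ Q*(s,a) - 2δ(Rmax - Rmin + ε)/(1-γ)²` for all `(s,a)`.
Here `Pol` abstractly indexes the set of policies, `Qtrue π` is the fixed point of the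
true Bellman operator `B^π` and `Qemp π` that of the empirical operator `B̂^π`. -/
theorem stmt_6 {S A Pol : Type*} (γ Rmin Rmax ε δ : ℝ) (hγ0 : 0 ≤ γ) (hγ1 : γ < 1)
    (Qtrue Qemp : Pol → S → A → ℝ)
    (πstar πhatstar : Pol)
    -- `π*` is optimal for the true Q-values; `Q* = Qtrue πstar`:
    (hopt : ∀ (π : Pol) s a, Qtrue π s a ≤ Qtrue πstar s a)
    -- `π̂*` is optimal for the empirical Bellman optimality operator:
    (hemp_opt : ∀ (π : Pol) s a, Qemp π s a ≤ Qemp πhatstar s a)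
    -- key lemma (from `‖R_ρ - R̂_ρ‖_∞ ≤ δ`):
    (hlem : ∀ (π : Pol) s a, |Qtrue π s a - Qemp π s a| ≤ δ * (Rmax - Rmin + ε) / (1 - γ) ^ 2) :
    ∀ s a, Qtrue πhatstar s a ≥
      Qtrue πstar s a - 2 * δ * (Rmax - Rmin + ε) / (1 - γ) ^ 2 := by
  intro s a
  have h1 := hlem πhatstar s a
  have h2 := hlem πstar s a
  have h3 := hemp_opt πstar s a
  have h1' := abs_le.mp h1
  have h2' := abs_le.mp h2
  have : 2 * δ * (Rmax - Rmin + ε) / (1 - γ) ^ 2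
      = δ * (Rmax - Rmin + ε) / (1 - γ) ^ 2 + δ * (Rmax - Rmin + ε) / (1 - γ) ^ 2 := by
    ring
  rw [ge_iff_le, this]
  linarith [h1'.1, h1'.2, h2'.1, h2'.2]
end
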